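/- arXiv:2503.06958 — 2 statements merged into one kernel-verified Lean document; each statement's English description precedes it below -/
import Mathlib

section
/- In a nearest-neighbor SFT X_F, every locally admissible finite configuration supported on a finite subset of Z^2 is globally admissible (extends to a point of X_F), provided X_F satisfies SSF. -/
/-- Local admissibility on a set `S` of sites. -/
def AdmOn {A : Type*} (Fh Fv : Set (A × A)) (S : Set (ℤ × ℤ)) (x : ℤ × ℤ → A) : Prop :=
  ∀ u : ℤ × ℤ, u ∈ S →
    ((u + (1, 0)) ∈ S → (x u, x (u + (1, 0))) ∉ Fh) ∧
    ((u + (0, 1)) ∈ S → (x u, x (u + (0, 1))) ∉ Fv)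

/-- The nearest-neighbor SFT defined by `Fh`, `Fv`. -/
def XF {A : Type*} (Fh Fv : Set (A × A)) : Set (ℤ × ℤ → A) :=
  {x | ∀ u : ℤ × ℤ, (x u, x (u + (1, 0))) ∉ Fh ∧ (x u, x (u + (0, 1))) ∉ Fv}

/-- Single-site fillability. -/
def SSF {A : Type*} (Fh Fv : Set (A × A)) : Prop :=
  ∀ wr wl wu wd : A, ∃ a : A, (a, wr) ∉ Fh ∧ (wl, a) ∉ Fh ∧ (a, wu) ∉ Fv ∧ (wd, a) ∉ Fv


/-!
Enumerate the sites of `ℤ²` and visit them one at a time, leaving the sites of `S` untouched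
and giving every other site a symbol allowed next to the current values of its four neighbours,
which exists by SSF. Every stage is locally admissible on `S` together with the sites visited so
far, and a site never changes after its visit, so the pointwise limit is admissible everywhere.
-/

open Function Set

section

variable {A : Type*} {Fh Fv : Set (A × A)}

def PairAllowed (Fh Fv : Set (A × A)) (u : ℤ × ℤ) (a : A) (v : ℤ × ℤ) (b : A) : Prop :=
  (v = u + (1, 0) → (a, b) ∉ Fh) ∧ (v = u + (0, 1) → (a, b) ∉ Fv)

theorem pairAllowed_self (u : ℤ × ℤ) (a b : A) : PairAllowed Fh Fv u a u b := by
  simp [PairAllowed, Prod.ext_iff]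

theorem admOn_iff_pairAllowed {T : Set (ℤ × ℤ)} {x : ℤ × ℤ → A} :
    AdmOn Fh Fv T x ↔ ∀ u ∈ T, ∀ v ∈ T, PairAllowed Fh Fv u (x u) v (x v) := by
  constructor
  · intro hx u hu v hv
    exact ⟨by rintro rfl; exact (hx u hu).1 hv, by rintro rfl; exact (hx u hu).2 hv⟩
  · intro hx u hu
    exact ⟨fun hv => (hx u hu _ hv).1 rfl, fun hv => (hx u hu _ hv).2 rfl⟩

theorem mem_XF_iff_admOn_univ {x : ℤ × ℤ → A} : x ∈ XF Fh Fv ↔ AdmOn Fh Fv univ x := by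
  simp [XF, AdmOn]

theorem SSF.exists_pairAllowed (hssf : SSF Fh Fv) (x : ℤ × ℤ → A) (v : ℤ × ℤ) :
    ∃ a, ∀ u, PairAllowed Fh Fv u (x u) v a ∧ PairAllowed Fh Fv v a u (x u) := by
  obtain ⟨a, hr, hl, hu, hd⟩ :=
    hssf (x (v + (1, 0))) (x (v + (-1, 0))) (x (v + (0, 1))) (x (v + (0, -1)))
  refine ⟨a, fun u => ⟨⟨?_, ?_⟩, ⟨?_, ?_⟩⟩⟩ <;> rintro rfl
  · simpa [add_assoc, Prod.mk_zero_zero] using hl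
  · simpa [add_assoc, Prod.mk_zero_zero] using hd
  · exact hr
  · exact hu

noncomputable def fillAt (hssf : SSF Fh Fv) (S : Set (ℤ × ℤ)) (x : ℤ × ℤ → A) (v : ℤ × ℤ) :
    ℤ × ℤ → A :=
  open Classical in
  if v ∈ S then x else update x v (hssf.exists_pairAllowed x v).choose

section fillAt

variable (hssf : SSF Fh Fv) {S T : Set (ℤ × ℤ)} {x : ℤ × ℤ → A} {u v : ℤ × ℤ}

theorem fillAt_apply_of_ne (h : u ≠ v) : fillAt hssf S x v u = x u := by
  unfold fillAt
  split_ifs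
  · rfl
  · exact update_of_ne h _ _

theorem fillAt_apply_of_mem (h : u ∈ S) : fillAt hssf S x v u = x u := by
  unfold fillAt
  split_ifs with hv
  · rfl
  · exact update_of_ne (ne_of_mem_of_not_mem h hv) _ _

theorem AdmOn.fillAt (hx : AdmOn Fh Fv T x) (hST : S ⊆ T) :
    AdmOn Fh Fv (insert v T) (fillAt hssf S x v) := by
  unfold _root_.fillAt
  split_ifs with hv
  · rwa [insert_eq_of_mem (hST hv)]
  have ha := (hssf.exists_pairAllowed x v).choose_spec
  rw [admOn_iff_pairAllowed] at hx ⊢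
  intro u hu u' hu'
  rcases eq_or_ne u v with huv | huv <;> rcases eq_or_ne u' v with hu'v | hu'v
  · rw [huv, hu'v]
    exact pairAllowed_self _ _ _
  · rw [huv, update_self, update_of_ne hu'v]
    exact (ha u').2
  · rw [hu'v, update_self, update_of_ne huv]
    exact (ha u).1
  · rw [update_of_ne huv, update_of_ne hu'v]
    exact hx u (hu.resolve_left huv) u' (hu'.resolve_left hu'v)

end fillAt

noncomputable def greedyFill (hssf : SSF Fh Fv) (S : Set (ℤ × ℤ)) (w : ℤ × ℤ → A)
    (e : ℕ → ℤ × ℤ) : ℕ → ℤ × ℤ → A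
  | 0 => w
  | n + 1 => fillAt hssf S (greedyFill hssf S w e n) (e n)

section greedyFill

variable (hssf : SSF Fh Fv) {S : Set (ℤ × ℤ)} {w : ℤ × ℤ → A} {e : ℕ → ℤ × ℤ}

theorem admOn_greedyFill (hw : AdmOn Fh Fv S w) (n : ℕ) :
    AdmOn Fh Fv (S ∪ e '' Iio n) (greedyFill hssf S w e n) := by
  induction n with
  | zero => simpa [greedyFill] using hw
  | succ n ih =>
    rw [Iio_add_one_eq_Iic, ← Iio_insert, image_insert_eq, union_insert]
    exact ih.fillAt hssf subset_union_left

theorem greedyFill_apply_of_mem (he : Injective e) {m n : ℕ} (hmn : m ≤ n) {u : ℤ × ℤ}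
    (hu : u ∈ S ∪ e '' Iio m) : greedyFill hssf S w e n u = greedyFill hssf S w e m u := by
  induction n, hmn using Nat.le_induction with
  | base => rfl
  | succ k hmk ih =>
    rw [greedyFill, ← ih]
    rcases hu with hu | ⟨j, hj, rfl⟩
    · exact fillAt_apply_of_mem hssf hu
    · exact fillAt_apply_of_ne hssf (he.ne (hj.trans_le hmk).ne)

end greedyFill

theorem exists_mem_XF_eqOn (hssf : SSF Fh Fv) {S : Set (ℤ × ℤ)} {w : ℤ × ℤ → A}
    (hw : AdmOn Fh Fv S w) : ∃ x ∈ XF Fh Fv, EqOn x w S := by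
  set e := (Denumerable.eqv (ℤ × ℤ)).symm
  have mem_visited (u : ℤ × ℤ) {n : ℕ} (hn : e.symm u < n) : u ∈ S ∪ e '' Iio n :=
    Or.inr ⟨e.symm u, hn, e.apply_symm_apply u⟩
  set x : ℤ × ℤ → A := fun u => greedyFill hssf S w e (e.symm u + 1) u
  have hx (u : ℤ × ℤ) {n : ℕ} (hn : e.symm u < n) : x u = greedyFill hssf S w e n u :=
    (greedyFill_apply_of_mem hssf e.injective hn (mem_visited u (Nat.lt_succ_self _))).symm
  refine ⟨x, ?_, fun u hu => ?_⟩
  · rw [mem_XF_iff_admOn_univ, admOn_iff_pairAllowed]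
    intro u _ v _
    set N := max (e.symm u) (e.symm v) + 1
    rw [hx u (n := N) (by omega), hx v (n := N) (by omega)]
    exact admOn_iff_pairAllowed.1 (admOn_greedyFill hssf hw N) u (mem_visited u (by omega))
      v (mem_visited v (by omega))
  · exact greedyFill_apply_of_mem hssf e.injective (Nat.zero_le _) (Or.inl hu)

end

theorem stmt9_general {A : Type*} (Fh Fv : Set (A × A)) (hssf : SSF Fh Fv)
    (S : Finset (ℤ × ℤ)) (w : ℤ × ℤ → A) (hw : AdmOn Fh Fv (↑S) w) :
    ∃ x ∈ XF Fh Fv, ∀ u ∈ S, x u = w u := by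
  obtain ⟨x, hx, hxw⟩ := exists_mem_XF_eqOn hssf hw
  exact ⟨x, hx, fun u hu => hxw (Finset.mem_coe.2 hu)⟩

theorem stmt9 {A : Type*} [Fintype A] (Fh Fv : Set (A × A)) (hssf : SSF Fh Fv)
    (S : Finset (ℤ × ℤ)) (w : ℤ × ℤ → A) (hw : AdmOn Fh Fv (↑S) w) :
    ∃ x ∈ XF Fh Fv, ∀ u ∈ S, x u = w u :=
  stmt9_general Fh Fv hssf S w hw
end

section
/- Main theorem: Let X = X_F be a nearest-neighbor Z^2 subshift of finite type satisfying single-site fillability, and let f be its penalty function. Then there exists ε > 0 (one may take ε = 1/64) such that for every Lipschitz function g with ||f - g||_Lip < ε, every maximizing measure of g is supported on X. -/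
/-!
Call a site a defect if one of its two outgoing edges carries a forbidden pair. Single-site
fillability gives a local repair map `x ↦ repair x` into `X_F`: the sites within distance one of a
defect are refilled in four rounds, one per parity class `ℤ² / 2ℤ²`, each new symbol being chosen
compatible with its four current neighbours; since adjacent sites lie in different classes, no
later round spoils an earlier one. The map commutes with the shifts by `2ℤ²`, so for an invariant
`μ` the average `ν` of the push-forwards of `μ` under `σ_v ∘ repair`, `v ∈ {0,1}²`, is invariant and
lives on `X_F`, where `g = -(f - g)`. A configuration and its repair differ only near defects, so by
the Lipschitz bound on `f - g` and a union bound over the `(2n+1)²` sites of sup-norm `≤ n`,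
`∫ g dν ≥ ∫ g dμ + (1 - 256 K) μ(f = -1)`. If `μ` is maximizing and `K < 1/256`, this forces
`μ(f = -1) = 0`, and then `μ(X_F) = 1` by invariance.
-/

open scoped Classical
open MeasureTheory

/-- The shift action of `ℤ × ℤ` on configurations. -/
def shiftZ2 {A : Type*} (u : ℤ × ℤ) (x : ℤ × ℤ → A) : ℤ × ℤ → A := fun v => x (v + u)

/-- The penalty function. -/
noncomputable def penalty {A : Type*} (Fh Fv : Set (A × A)) (x : ℤ × ℤ → A) : ℝ :=
  if (x 0, x (1, 0)) ∈ Fh ∨ (x 0, x (0, 1)) ∈ Fv then -1 else 0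

/-- The metric `d(x,y) = 2^{-i}` with `i = inf {‖u‖_∞ : x_u ≠ y_u}`. -/
noncomputable def dmet {A : Type*} (x y : ℤ × ℤ → A) : ℝ :=
  if x = y then 0
  else (1 / 2 : ℝ) ^ sInf {n : ℕ | ∃ u : ℤ × ℤ, max u.1.natAbs u.2.natAbs = n ∧ x u ≠ y u}

namespace PenaltyStability

open scoped ENNReal

variable {A : Type*}

def supNorm (u : ℤ × ℤ) : ℕ := max u.1.natAbs u.2.natAbs

lemma supNorm_add_le (u v : ℤ × ℤ) : supNorm (u + v) ≤ supNorm u + supNorm v := by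
  simp only [supNorm, Prod.fst_add, Prod.snd_add]
  omega

noncomputable def box (n : ℕ) : Finset (ℤ × ℤ) :=
  Finset.Icc (-(n : ℤ)) n ×ˢ Finset.Icc (-(n : ℤ)) n

lemma mem_box {n : ℕ} {w : ℤ × ℤ} : w ∈ box n ↔ supNorm w ≤ n := by
  simp only [box, supNorm, Finset.mem_product, Finset.mem_Icc]
  omega

lemma card_box (n : ℕ) : (box n).card = (2 * n + 1) ^ 2 := by
  rw [box, Finset.card_product, Int.card_Icc, sq]
  congr 1 <;> omega

section Repair

def IsDefect (Fh Fv : Set (A × A)) (x : ℤ × ℤ → A) (u : ℤ × ℤ) : Prop :=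
  (x u, x (u + (1, 0))) ∈ Fh ∨ (x u, x (u + (0, 1))) ∈ Fv

def NearDefect (Fh Fv : Set (A × A)) (x : ℤ × ℤ → A) (w : ℤ × ℤ) : Prop :=
  ∃ d, supNorm d ≤ 1 ∧ IsDefect Fh Fv x (w + d)

def parityClass (w : ℤ × ℤ) : ℕ := (w.1 % 2).toNat + 2 * (w.2 % 2).toNat

lemma parityClass_lt_four (w : ℤ × ℤ) : parityClass w < 4 := by
  simp only [parityClass]
  omega

lemma parityClass_add_right_ne (w : ℤ × ℤ) : parityClass w ≠ parityClass (w + (1, 0)) := by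
  simp only [parityClass, Prod.fst_add, Prod.snd_add]
  omega

lemma parityClass_add_up_ne (w : ℤ × ℤ) : parityClass w ≠ parityClass (w + (0, 1)) := by
  simp only [parityClass, Prod.fst_add, Prod.snd_add]
  omega

lemma parityClass_add_of_dvd {t : ℤ × ℤ} (h₁ : 2 ∣ t.1) (h₂ : 2 ∣ t.2) (w : ℤ × ℤ) :
    parityClass (w + t) = parityClass w := by
  simp only [parityClass, Prod.fst_add, Prod.snd_add]
  omega

variable {Fh Fv : Set (A × A)}

lemma nearDefect_of_isDefect {x : ℤ × ℤ → A} {w : ℤ × ℤ} (h : IsDefect Fh Fv x w) :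
    NearDefect Fh Fv x w :=
  ⟨0, by simp [supNorm], by rwa [add_zero]⟩

noncomputable def fillSymbol (hssf : SSF Fh Fv) (r l u d : A) : A := (hssf r l u d).choose

lemma fillSymbol_spec (hssf : SSF Fh Fv) (r l u d : A) :
    (fillSymbol hssf r l u d, r) ∉ Fh ∧ (l, fillSymbol hssf r l u d) ∉ Fh ∧
      (fillSymbol hssf r l u d, u) ∉ Fv ∧ (d, fillSymbol hssf r l u d) ∉ Fv :=
  (hssf r l u d).choose_spec

noncomputable def fillRounds (hssf : SSF Fh Fv) (x : ℤ × ℤ → A) : ℕ → ℤ × ℤ → A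
  | 0 => x
  | k + 1 => fun w =>
      if NearDefect Fh Fv x w ∧ parityClass w = k then
        fillSymbol hssf (fillRounds hssf x k (w + (1, 0))) (fillRounds hssf x k (w - (1, 0)))
          (fillRounds hssf x k (w + (0, 1))) (fillRounds hssf x k (w - (0, 1)))
      else fillRounds hssf x k w

noncomputable def repair (hssf : SSF Fh Fv) (x : ℤ × ℤ → A) : ℤ × ℤ → A := fillRounds hssf x 4

variable (hssf : SSF Fh Fv) (x : ℤ × ℤ → A)

lemma fillRounds_of_not_nearDefect {w : ℤ × ℤ} (h : ¬ NearDefect Fh Fv x w) (k : ℕ) :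
    fillRounds hssf x k w = x w := by
  induction k with
  | zero => rfl
  | succ k ih => simp only [fillRounds, h, false_and, if_false, ih]

lemma fillRounds_eq_of_parityClass_lt {w : ℤ × ℤ} {k k' : ℕ} (hw : parityClass w < k)
    (hk : k ≤ k') : fillRounds hssf x k' w = fillRounds hssf x k w := by
  induction k', hk using Nat.le_induction with
  | base => rfl
  | succ k' hk ih =>
    simp only [fillRounds]
    rw [if_neg (by omega), ih]

lemma repair_of_not_nearDefect {w : ℤ × ℤ} (h : ¬ NearDefect Fh Fv x w) :
    repair hssf x w = x w :=
  fillRounds_of_not_nearDefect hssf x h 4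

lemma repair_eq_fillRounds {w : ℤ × ℤ} :
    repair hssf x w = fillRounds hssf x (parityClass w + 1) w :=
  fillRounds_eq_of_parityClass_lt hssf x (Nat.lt_succ_self _) (parityClass_lt_four w)

lemma fillRounds_eq_repair {w : ℤ × ℤ} {k : ℕ}
    (h : ¬ NearDefect Fh Fv x w ∨ parityClass w < k) : fillRounds hssf x k w = repair hssf x w := by
  rcases h with h | h
  · rw [fillRounds_of_not_nearDefect hssf x h, repair_of_not_nearDefect hssf x h]
  · rw [repair_eq_fillRounds, fillRounds_eq_of_parityClass_lt hssf x (Nat.lt_succ_self _) h]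

lemma repair_of_nearDefect {w : ℤ × ℤ} (h : NearDefect Fh Fv x w) :
    repair hssf x w = fillSymbol hssf
      (fillRounds hssf x (parityClass w) (w + (1, 0)))
      (fillRounds hssf x (parityClass w) (w - (1, 0)))
      (fillRounds hssf x (parityClass w) (w + (0, 1)))
      (fillRounds hssf x (parityClass w) (w - (0, 1))) := by
  rw [repair_eq_fillRounds]
  simp only [fillRounds, h, and_self, if_true]

/-- Whichever endpoint of an edge is refilled last was filled compatibly with the final symbol at
the other endpoint. -/
lemma repair_pair_not_mem {R : Set (A × A)} {e : ℤ × ℤ}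
    (hne : ∀ w, parityClass w ≠ parityClass (w + e))
    (hnear : ∀ w, (x w, x (w + e)) ∈ R → NearDefect Fh Fv x w)
    (hfwd : ∀ w, NearDefect Fh Fv x w →
      (repair hssf x w, fillRounds hssf x (parityClass w) (w + e)) ∉ R)
    (hbwd : ∀ w, NearDefect Fh Fv x w →
      (fillRounds hssf x (parityClass w) (w - e), repair hssf x w) ∉ R)
    (u : ℤ × ℤ) : (repair hssf x u, repair hssf x (u + e)) ∉ R := by
  have from_end (hu : ¬ NearDefect Fh Fv x u ∨ parityClass u < parityClass (u + e))
      (hn : NearDefect Fh Fv x (u + e)) : (repair hssf x u, repair hssf x (u + e)) ∉ R := by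
    simpa only [add_sub_cancel_right, fillRounds_eq_repair hssf x hu] using hbwd _ hn
  have from_start (hn : ¬ NearDefect Fh Fv x (u + e) ∨ parityClass (u + e) < parityClass u)
      (hu : NearDefect Fh Fv x u) : (repair hssf x u, repair hssf x (u + e)) ∉ R := by
    simpa only [fillRounds_eq_repair hssf x hn] using hfwd _ hu
  by_cases hu : NearDefect Fh Fv x u <;> by_cases hn : NearDefect Fh Fv x (u + e)
  · rcases (hne u).lt_or_gt with h | h
    · exact from_end (Or.inr h) hn
    · exact from_start (Or.inr h) hu
  · exact from_start (Or.inl hn) hu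
  · exact from_end (Or.inl hu) hn
  · rw [repair_of_not_nearDefect hssf x hu, repair_of_not_nearDefect hssf x hn]
    exact fun h => hu (hnear u h)

theorem repair_mem_XF : repair hssf x ∈ XF Fh Fv := by
  intro u
  constructor
  · refine repair_pair_not_mem hssf x parityClass_add_right_ne
      (fun w h => nearDefect_of_isDefect (Or.inl h)) (fun w hw => ?_) (fun w hw => ?_) u
    · rw [repair_of_nearDefect hssf x hw]
      exact (fillSymbol_spec hssf _ _ _ _).1
    · rw [repair_of_nearDefect hssf x hw]
      exact (fillSymbol_spec hssf _ _ _ _).2.1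
  · refine repair_pair_not_mem hssf x parityClass_add_up_ne
      (fun w h => nearDefect_of_isDefect (Or.inr h)) (fun w hw => ?_) (fun w hw => ?_) u
    · rw [repair_of_nearDefect hssf x hw]
      exact (fillSymbol_spec hssf _ _ _ _).2.2.1
    · rw [repair_of_nearDefect hssf x hw]
      exact (fillSymbol_spec hssf _ _ _ _).2.2.2

lemma exists_isDefect_of_repair_ne {w : ℤ × ℤ} (h : repair hssf x w ≠ x w) :
    ∃ u, IsDefect Fh Fv x u ∧ supNorm u ≤ supNorm w + 1 := by
  obtain ⟨d, hd, hdef⟩ : NearDefect Fh Fv x w := by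
    by_contra hw
    exact h (repair_of_not_nearDefect hssf x hw)
  exact ⟨w + d, hdef, (supNorm_add_le w d).trans (by omega)⟩

end Repair

section Shift

variable {Fh Fv : Set (A × A)}

lemma shiftZ2_shiftZ2 (u w : ℤ × ℤ) (x : ℤ × ℤ → A) :
    shiftZ2 u (shiftZ2 w x) = shiftZ2 (u + w) x := by
  funext v
  simp [shiftZ2, add_assoc]

lemma isDefect_shiftZ2 (x : ℤ × ℤ → A) (t u : ℤ × ℤ) :
    IsDefect Fh Fv (shiftZ2 t x) u ↔ IsDefect Fh Fv x (u + t) := by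
  simp only [IsDefect, shiftZ2, add_right_comm u _ t]

lemma nearDefect_shiftZ2 (x : ℤ × ℤ → A) (t w : ℤ × ℤ) :
    NearDefect Fh Fv (shiftZ2 t x) w ↔ NearDefect Fh Fv x (w + t) := by
  simp only [NearDefect, isDefect_shiftZ2, add_right_comm w _ t]

lemma shiftZ2_mem_XF {y : ℤ × ℤ → A} (h : y ∈ XF Fh Fv) (t : ℤ × ℤ) :
    shiftZ2 t y ∈ XF Fh Fv := fun u => by
  simpa only [shiftZ2, add_right_comm u _ t] using h (u + t)

variable (hssf : SSF Fh Fv) (x : ℤ × ℤ → A)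

lemma fillRounds_shiftZ2 {t : ℤ × ℤ} (h₁ : 2 ∣ t.1) (h₂ : 2 ∣ t.2) (k : ℕ) (w : ℤ × ℤ) :
    fillRounds hssf (shiftZ2 t x) k w = fillRounds hssf x k (w + t) := by
  induction k generalizing w with
  | zero => rfl
  | succ k ih =>
    simp only [fillRounds, nearDefect_shiftZ2, parityClass_add_of_dvd h₁ h₂, ih,
      add_right_comm w _ t, sub_add_eq_add_sub]

theorem repair_shiftZ2 {t : ℤ × ℤ} (h₁ : 2 ∣ t.1) (h₂ : 2 ∣ t.2) :
    repair hssf (shiftZ2 t x) = shiftZ2 t (repair hssf x) :=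
  funext (fillRounds_shiftZ2 hssf x h₁ h₂ 4)

end Shift

def defectSet (Fh Fv : Set (A × A)) : Set (ℤ × ℤ → A) := {x | IsDefect Fh Fv x 0}

section Measurability

variable {Fh Fv : Set (A × A)}

lemma isDefect_iff_shiftZ2_mem (x : ℤ × ℤ → A) (u : ℤ × ℤ) :
    IsDefect Fh Fv x u ↔ shiftZ2 u x ∈ defectSet Fh Fv := by
  rw [defectSet, Set.mem_ofPred_eq, isDefect_shiftZ2, zero_add]

lemma penalty_eq_indicator :
    penalty Fh Fv = (defectSet Fh Fv).indicator (fun _ => (-1 : ℝ)) := by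
  funext y
  simp only [penalty, Set.indicator, defectSet, IsDefect, Set.mem_ofPred_eq, zero_add]

lemma penalty_eq_zero_of_mem_XF {y : ℤ × ℤ → A} (h : y ∈ XF Fh Fv) : penalty Fh Fv y = 0 := by
  simpa [penalty] using h 0

lemma abs_penalty_le_one (x : ℤ × ℤ → A) : |penalty Fh Fv x| ≤ 1 := by
  unfold penalty
  split_ifs <;> norm_num

lemma measurable_shiftZ2 [MeasurableSpace A] (u : ℤ × ℤ) : Measurable (shiftZ2 (A := A) u) :=
  measurable_pi_lambda _ fun v => measurable_pi_apply (v + u)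

variable [MeasurableSpace A] [MeasurableSingletonClass A] [Countable A]

lemma measurableSet_isDefect (u : ℤ × ℤ) :
    MeasurableSet {x : ℤ × ℤ → A | IsDefect Fh Fv x u} := by
  have hpair (e : ℤ × ℤ) : Measurable fun x : ℤ × ℤ → A => (x u, x (u + e)) :=
    (measurable_pi_apply u).prodMk (measurable_pi_apply (u + e))
  exact (hpair _ MeasurableSet.of_discrete).union (hpair _ MeasurableSet.of_discrete)

lemma measurableSet_defectSet : MeasurableSet (defectSet Fh Fv) := measurableSet_isDefect 0

lemma measurable_penalty : Measurable (penalty Fh Fv) := by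
  rw [penalty_eq_indicator]
  exact measurable_const.indicator measurableSet_defectSet

lemma measurableSet_nearDefect (w : ℤ × ℤ) :
    MeasurableSet {x : ℤ × ℤ → A | NearDefect Fh Fv x w} := by
  simp only [NearDefect, Set.ofPred_exists, Set.ofPred_and]
  exact .iUnion fun d => (MeasurableSet.const _).inter (measurableSet_isDefect _)

lemma integral_penalty {μ : Measure (ℤ × ℤ → A)} :
    ∫ x, penalty Fh Fv x ∂μ = -(μ (defectSet Fh Fv)).toReal := by
  rw [penalty_eq_indicator, integral_indicator_const _ measurableSet_defectSet]
  simp [Measure.real]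

lemma measurable_fillRounds (hssf : SSF Fh Fv) (k : ℕ) (w : ℤ × ℤ) :
    Measurable fun x : ℤ × ℤ → A => fillRounds hssf x k w := by
  induction k generalizing w with
  | zero => exact measurable_pi_apply w
  | succ k ih =>
    have hfill : Measurable fun b : A × A × A × A => fillSymbol hssf b.1 b.2.1 b.2.2.1 b.2.2.2 :=
      measurable_of_countable _
    refine Measurable.ite ((measurableSet_nearDefect w).inter (MeasurableSet.const _))
      (hfill.comp ((ih _).prodMk ((ih _).prodMk ((ih _).prodMk (ih _))))) (ih w)

lemma measurable_repair (hssf : SSF Fh Fv) : Measurable (repair (A := A) hssf) :=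
  measurable_pi_lambda _ (measurable_fillRounds hssf 4)

end Measurability

section Metric

lemma dmet_self (x : ℤ × ℤ → A) : dmet x x = 0 := if_pos rfl

lemma exists_ne_dmet_eq {x y : ℤ × ℤ → A} (h : x ≠ y) :
    ∃ w, x w ≠ y w ∧ dmet x y = (1 / 2 : ℝ) ^ supNorm w := by
  have hne : {n : ℕ | ∃ u : ℤ × ℤ, supNorm u = n ∧ x u ≠ y u}.Nonempty := by
    obtain ⟨u, hu⟩ := Function.ne_iff.mp h
    exact ⟨_, u, rfl, hu⟩
  obtain ⟨w, hw, hxy⟩ := Nat.sInf_mem hne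
  exact ⟨w, hxy, by rw [dmet, if_neg h]; exact congrArg _ hw.symm⟩

lemma dmet_le_of_eqOn {x y : ℤ × ℤ → A} {n : ℕ} (h : ∀ w, supNorm w < n → x w = y w) :
    dmet x y ≤ (1 / 2 : ℝ) ^ n := by
  by_cases hxy : x = y
  · rw [hxy, dmet_self]
    positivity
  obtain ⟨w, hw, hd⟩ := exists_ne_dmet_eq hxy
  rw [hd]
  exact pow_le_pow_of_le_one (by norm_num) (by norm_num) (not_lt.mp fun hlt => hw (h w hlt))

lemma continuous_of_abs_sub_le_dmet [TopologicalSpace A] [DiscreteTopology A]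
    {q : (ℤ × ℤ → A) → ℝ} {K : ℝ} (hK : 0 ≤ K) (hq : ∀ x y, |q x - q y| ≤ K * dmet x y) :
    Continuous q := by
  refine continuous_iff_continuousAt.mpr fun x => Metric.tendsto_nhds.mpr fun ε hε => ?_
  obtain ⟨n, hn⟩ : ∃ n : ℕ, K * (1 / 2 : ℝ) ^ n < ε :=
    ((tendsto_pow_atTop_nhds_zero_of_lt_one (by norm_num) (by norm_num)).const_mul K).eventually
      (gt_mem_nhds (by simpa using hε)) |>.exists
  have hbox : ∀ᶠ y in nhds x, ∀ w ∈ box n, y w ∈ ({x w} : Set A) := (Finset.eventually_all _).mpr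
    fun w _ => (continuous_apply w).continuousAt.eventually_mem ((isOpen_discrete _).mem_nhds rfl)
  filter_upwards [hbox] with y hy
  have hdist : dmet y x ≤ (1 / 2 : ℝ) ^ n :=
    dmet_le_of_eqOn fun w hw => hy w (mem_box.mpr hw.le)
  calc dist (q y) (q x) = |q y - q x| := Real.dist_eq _ _
    _ ≤ K * (1 / 2 : ℝ) ^ n := (hq y x).trans (mul_le_mul_of_nonneg_left hdist hK)
    _ < ε := hn

end Metric

section Weight

variable {Fh Fv : Set (A × A)}

def DefectWithin (Fh Fv : Set (A × A)) (x : ℤ × ℤ → A) (n : ℕ) : Prop :=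
  ∃ u, supNorm u ≤ n ∧ IsDefect Fh Fv x u

noncomputable def defectWeight (Fh Fv : Set (A × A)) (x : ℤ × ℤ → A) : ℝ≥0∞ :=
  ∑' n : ℕ, 2⁻¹ ^ n * {y | DefectWithin Fh Fv y n}.indicator 1 x

lemma pow_le_defectWeight {x : ℤ × ℤ → A} {n : ℕ} (h : DefectWithin Fh Fv x n) :
    (2⁻¹ : ℝ≥0∞) ^ n ≤ defectWeight Fh Fv x := by
  have hx : x ∈ {y | DefectWithin Fh Fv y n} := h
  simpa [defectWeight, Set.indicator_of_mem hx] using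
    ENNReal.le_tsum (f := fun n => (2⁻¹ : ℝ≥0∞) ^ n * {y | DefectWithin Fh Fv y n}.indicator 1 x) n

lemma ofReal_dmet_shiftZ2_repair_le (hssf : SSF Fh Fv) (x : ℤ × ℤ → A) {v : ℤ × ℤ}
    (hv : supNorm v ≤ 1) :
    ENNReal.ofReal (dmet (shiftZ2 v (repair hssf x)) (shiftZ2 v x)) ≤ 4 * defectWeight Fh Fv x := by
  by_cases h : shiftZ2 v (repair hssf x) = shiftZ2 v x
  · simp [h, dmet_self]
  obtain ⟨w, hw, hd⟩ := exists_ne_dmet_eq h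
  obtain ⟨u, hu, hnorm⟩ := exists_isDefect_of_repair_ne hssf x hw
  have hwithin : DefectWithin Fh Fv x (supNorm w + 2) :=
    ⟨u, (hnorm.trans (by have := supNorm_add_le w v; omega)), hu⟩
  calc ENNReal.ofReal (dmet (shiftZ2 v (repair hssf x)) (shiftZ2 v x))
      = 4 * 2⁻¹ ^ (supNorm w + 2) := by
        have hhalf : ENNReal.ofReal (1 / 2) = 2⁻¹ := by
          rw [one_div, ENNReal.ofReal_inv_of_pos two_pos, ENNReal.ofReal_ofNat]
        have hquarter : (4 : ℝ≥0∞) * 2⁻¹ ^ 2 = 1 := by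
          rw [← ENNReal.inv_pow, show (2 : ℝ≥0∞) ^ 2 = 4 by norm_num]
          exact ENNReal.mul_inv_cancel (by norm_num) (by norm_num)
        rw [hd, ENNReal.ofReal_pow (by norm_num), hhalf, pow_add, mul_left_comm, hquarter, mul_one]
    _ ≤ 4 * defectWeight Fh Fv x := mul_le_mul_right (pow_le_defectWeight hwithin) 4

lemma two_mul_add_one_sq_mul_two_pow_le (n : ℕ) : (2 * n + 1) ^ 2 * 2 ^ n ≤ 16 * 3 ^ n := by
  induction n with
  | zero => norm_num
  | succ k ih =>
    rcases Nat.lt_or_ge k 4 with h | h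
    · interval_cases k <;> norm_num
    · have hstep : 2 * (2 * (k + 1) + 1) ^ 2 ≤ 3 * (2 * k + 1) ^ 2 := by nlinarith
      calc (2 * (k + 1) + 1) ^ 2 * 2 ^ (k + 1) = 2 * (2 * (k + 1) + 1) ^ 2 * 2 ^ k := by ring
        _ ≤ 3 * (2 * k + 1) ^ 2 * 2 ^ k := Nat.mul_le_mul_right _ hstep
        _ = 3 * ((2 * k + 1) ^ 2 * 2 ^ k) := by ring
        _ ≤ 3 * (16 * 3 ^ k) := Nat.mul_le_mul_left _ ih
        _ = 16 * 3 ^ (k + 1) := by ring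

lemma tsum_inv_two_pow_mul_two_mul_add_one_sq_le :
    ∑' n : ℕ, (2⁻¹ : ℝ≥0∞) ^ n * ((2 * n + 1) ^ 2 : ℕ) ≤ 64 := by
  have hhalf : (2⁻¹ : ℝ≥0∞) = 2 * 4⁻¹ := by
    rw [show (4 : ℝ≥0∞) = 2 * 2 by norm_num, ENNReal.mul_inv (by simp) (by simp), ← mul_assoc,
      ENNReal.mul_inv_cancel (by simp) (by simp), one_mul]
  have hterm (n : ℕ) : (2⁻¹ : ℝ≥0∞) ^ n * ((2 * n + 1) ^ 2 : ℕ) ≤ 16 * (3 * 4⁻¹) ^ n := by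
    calc (2⁻¹ : ℝ≥0∞) ^ n * ((2 * n + 1) ^ 2 : ℕ)
        = ((2 ^ n * (2 * n + 1) ^ 2 : ℕ) : ℝ≥0∞) * 4⁻¹ ^ n := by
          rw [hhalf, mul_pow]
          push_cast
          ring
      _ ≤ ((16 * 3 ^ n : ℕ) : ℝ≥0∞) * 4⁻¹ ^ n := by
          gcongr ?_ * _
          exact_mod_cast (mul_comm _ _).trans_le (two_mul_add_one_sq_mul_two_pow_le n)
      _ = 16 * (3 * 4⁻¹) ^ n := by
          push_cast
          ring
  have hsub : (1 : ℝ≥0∞) - 3 * 4⁻¹ = 4⁻¹ := by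
    refine ENNReal.sub_eq_of_eq_add (ENNReal.mul_ne_top (by simp) (by simp)) ?_
    rw [← one_add_mul, show (1 : ℝ≥0∞) + 3 = 4 by norm_num,
      ENNReal.mul_inv_cancel (by norm_num) (by norm_num)]
  calc ∑' n : ℕ, (2⁻¹ : ℝ≥0∞) ^ n * ((2 * n + 1) ^ 2 : ℕ)
      ≤ ∑' n : ℕ, 16 * (3 * 4⁻¹ : ℝ≥0∞) ^ n := ENNReal.tsum_le_tsum hterm
    _ = 64 := by
      rw [ENNReal.tsum_mul_left, ENNReal.tsum_geometric, hsub, inv_inv]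
      norm_num

end Weight

section Invariant

variable {Fh Fv : Set (A × A)} [MeasurableSpace A] {μ : Measure (ℤ × ℤ → A)}

lemma measure_preimage_shiftZ2 (hμ : ∀ u, Measure.map (shiftZ2 u) μ = μ) (u : ℤ × ℤ)
    {s : Set (ℤ × ℤ → A)} (hs : MeasurableSet s) : μ (shiftZ2 u ⁻¹' s) = μ s := by
  rw [← Measure.map_apply (measurable_shiftZ2 u) hs, hμ u]

variable [MeasurableSingletonClass A] [Countable A]

lemma measurableSet_defectWithin (n : ℕ) :
    MeasurableSet {x : ℤ × ℤ → A | DefectWithin Fh Fv x n} := by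
  simp only [DefectWithin, Set.ofPred_exists, Set.ofPred_and]
  exact .iUnion fun u => (MeasurableSet.const _).inter (measurableSet_isDefect u)

lemma measure_defectWithin_le (hμ : ∀ u, Measure.map (shiftZ2 u) μ = μ) (n : ℕ) :
    μ {x | DefectWithin Fh Fv x n} ≤ ((2 * n + 1) ^ 2 : ℕ) * μ (defectSet Fh Fv) := by
  have hsub : {x | DefectWithin Fh Fv x n} ⊆ ⋃ u ∈ box n, shiftZ2 u ⁻¹' defectSet Fh Fv :=
    fun x ⟨u, hu, hdef⟩ => Set.mem_biUnion (mem_box.mpr hu) ((isDefect_iff_shiftZ2_mem x u).mp hdef)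
  calc μ {x | DefectWithin Fh Fv x n}
      ≤ ∑ u ∈ box n, μ (shiftZ2 u ⁻¹' defectSet Fh Fv) :=
        (measure_mono hsub).trans (measure_biUnion_finset_le _ _)
    _ = ((2 * n + 1) ^ 2 : ℕ) * μ (defectSet Fh Fv) := by
        simp only [measure_preimage_shiftZ2 hμ _ measurableSet_defectSet, Finset.sum_const,
          card_box, nsmul_eq_mul]

lemma lintegral_defectWeight_le (hμ : ∀ u, Measure.map (shiftZ2 u) μ = μ) :
    ∫⁻ x, defectWeight Fh Fv x ∂μ ≤ 64 * μ (defectSet Fh Fv) := by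
  calc ∫⁻ x, defectWeight Fh Fv x ∂μ
      = ∑' n : ℕ, 2⁻¹ ^ n * μ {x | DefectWithin Fh Fv x n} := by
        unfold defectWeight
        rw [lintegral_tsum fun n =>
          ((measurable_one.indicator (measurableSet_defectWithin n)).const_mul _).aemeasurable]
        congr 1 with n
        rw [lintegral_const_mul' _ _ (ENNReal.pow_ne_top (by simp)),
          lintegral_indicator_one (measurableSet_defectWithin n)]
    _ ≤ ∑' n : ℕ, 2⁻¹ ^ n * (((2 * n + 1) ^ 2 : ℕ) * μ (defectSet Fh Fv)) :=
        ENNReal.tsum_le_tsum fun n => by gcongr; exact measure_defectWithin_le hμ n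
    _ = (∑' n : ℕ, (2⁻¹ : ℝ≥0∞) ^ n * ((2 * n + 1) ^ 2 : ℕ)) * μ (defectSet Fh Fv) := by
        simp only [← ENNReal.tsum_mul_right, mul_assoc]
    _ ≤ 64 * μ (defectSet Fh Fv) := by gcongr; exact tsum_inv_two_pow_mul_two_mul_add_one_sq_le

end Invariant

section Average

noncomputable def evenReps : Finset (ℤ × ℤ) := Finset.Icc 0 1 ×ˢ Finset.Icc 0 1

lemma card_evenReps : evenReps.card = 4 := by
  simp [evenReps]

lemma mem_evenReps {v : ℤ × ℤ} : v ∈ evenReps ↔ 0 ≤ v.1 ∧ v.1 ≤ 1 ∧ 0 ≤ v.2 ∧ v.2 ≤ 1 := by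
  simp only [evenReps, Finset.mem_product, Finset.mem_Icc, and_assoc]

lemma sum_evenReps_add {M : Type*} [AddCommMonoid M] {f : ℤ × ℤ → M}
    (hf : ∀ w t : ℤ × ℤ, 2 ∣ t.1 → 2 ∣ t.2 → f (w + t) = f w) (u : ℤ × ℤ) :
    ∑ v ∈ evenReps, f (u + v) = ∑ v ∈ evenReps, f v := by
  let rep : ℤ × ℤ → ℤ × ℤ := fun w => (w.1 % 2, w.2 % 2)
  refine Finset.sum_nbij' (fun v => rep (u + v)) (fun v => rep (v - u)) ?_ ?_ ?_ ?_
    fun v _ => ?_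
  rotate_left 4
  · have hrep := hf (rep (u + v)) (u + v - rep (u + v))
      (by simp only [rep, Prod.fst_sub, Prod.fst_add]; omega)
      (by simp only [rep, Prod.snd_sub, Prod.snd_add]; omega)
    simpa only [add_sub_cancel] using hrep
  all_goals
    intro v hv
    simp only [rep, mem_evenReps, Prod.ext_iff, Prod.fst_add, Prod.snd_add, Prod.fst_sub,
      Prod.snd_sub] at hv ⊢
    omega

noncomputable def repairAverage {Fh Fv : Set (A × A)} [MeasurableSpace A] (hssf : SSF Fh Fv)
    (μ : Measure (ℤ × ℤ → A)) : Measure (ℤ × ℤ → A) :=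
  (4 : ℝ≥0∞)⁻¹ • ∑ v ∈ evenReps, μ.map (shiftZ2 v ∘ repair hssf)

variable {Fh Fv : Set (A × A)} [MeasurableSpace A] [MeasurableSingletonClass A] [Countable A]
  (hssf : SSF Fh Fv) {μ : Measure (ℤ × ℤ → A)}

lemma measurable_shiftZ2_comp_repair (v : ℤ × ℤ) : Measurable (shiftZ2 v ∘ repair (A := A) hssf) :=
  (measurable_shiftZ2 v).comp (measurable_repair hssf)

lemma repairAverage_apply {s : Set (ℤ × ℤ → A)} (hs : MeasurableSet s) :
    repairAverage hssf μ s = 4⁻¹ * ∑ v ∈ evenReps, μ ((shiftZ2 v ∘ repair hssf) ⁻¹' s) := by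
  simp only [repairAverage, Measure.smul_apply, Measure.finsetSum_apply, smul_eq_mul,
    Measure.map_apply (measurable_shiftZ2_comp_repair hssf _) hs]

lemma isProbabilityMeasure_repairAverage [IsProbabilityMeasure μ] :
    IsProbabilityMeasure (repairAverage hssf μ) := by
  constructor
  simp only [repairAverage_apply hssf MeasurableSet.univ, Set.preimage_univ, measure_univ,
    Finset.sum_const, card_evenReps, nsmul_eq_mul, mul_one]
  exact ENNReal.inv_mul_cancel (by norm_num) (by norm_num)

lemma map_shiftZ2_repairAverage (hμ : ∀ u, Measure.map (shiftZ2 u) μ = μ) (u : ℤ × ℤ) :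
    Measure.map (shiftZ2 u) (repairAverage hssf μ) = repairAverage hssf μ := by
  ext s hs
  have hpre (w : ℤ × ℤ) : MeasurableSet ((shiftZ2 w ∘ repair hssf) ⁻¹' s) :=
    measurable_shiftZ2_comp_repair hssf w hs
  rw [Measure.map_apply (measurable_shiftZ2 u) hs,
    repairAverage_apply hssf (measurable_shiftZ2 u hs), repairAverage_apply hssf hs]
  congr 1
  have hcomp (v : ℤ × ℤ) : (shiftZ2 v ∘ repair hssf) ⁻¹' (shiftZ2 u ⁻¹' s) =
      (shiftZ2 (u + v) ∘ repair hssf) ⁻¹' s := by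
    ext x
    simp [shiftZ2_shiftZ2]
  simp only [hcomp]
  refine sum_evenReps_add (f := fun w => μ ((shiftZ2 w ∘ repair hssf) ⁻¹' s))
    (fun w t h₁ h₂ => ?_) u
  have hshift : (shiftZ2 (w + t) ∘ repair hssf) ⁻¹' s =
      shiftZ2 t ⁻¹' ((shiftZ2 w ∘ repair hssf) ⁻¹' s) := by
    ext x
    simp [repair_shiftZ2 hssf x h₁ h₂, shiftZ2_shiftZ2]
  rw [hshift, measure_preimage_shiftZ2 hμ t (hpre w)]

lemma integral_repairAverage [IsProbabilityMeasure μ] {g : (ℤ × ℤ → A) → ℝ} (hg : Measurable g)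
    {M : ℝ} (hgM : ∀ x, |g x| ≤ M) :
    ∫ x, g x ∂(repairAverage hssf μ) =
      4⁻¹ * ∑ v ∈ evenReps, ∫ x, g (shiftZ2 v (repair hssf x)) ∂μ := by
  rw [repairAverage, integral_smul_measure, integral_finsetSum_measure fun v _ =>
    Integrable.of_bound hg.aestronglyMeasurable M (ae_of_all _ hgM)]
  simp only [integral_map (measurable_shiftZ2_comp_repair hssf _).aemeasurable
    hg.aestronglyMeasurable, Function.comp_apply, ENNReal.toReal_inv, smul_eq_mul]
  norm_num

end Average

section Main

variable {Fh Fv : Set (A × A)}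

lemma measure_compl_XF_eq_zero [MeasurableSpace A] [MeasurableSingletonClass A] [Countable A]
    {μ : Measure (ℤ × ℤ → A)} (hμ : ∀ u, Measure.map (shiftZ2 u) μ = μ)
    (h : μ (defectSet Fh Fv) = 0) : μ (XF Fh Fv)ᶜ = 0 := by
  have hsub : (XF Fh Fv)ᶜ ⊆ ⋃ u, shiftZ2 u ⁻¹' defectSet Fh Fv := by
    intro x hx
    obtain ⟨u, hu⟩ : ∃ u, IsDefect Fh Fv x u := by
      by_contra! hnone
      exact hx fun u => not_or.mp (hnone u)
    exact Set.mem_iUnion.mpr ⟨u, (isDefect_iff_shiftZ2_mem x u).mp hu⟩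
  refine measure_mono_null hsub (measure_iUnion_null fun u => ?_)
  rw [measure_preimage_shiftZ2 hμ u measurableSet_defectSet, h]

lemma integral_comp_shiftZ2 [MeasurableSpace A] {μ : Measure (ℤ × ℤ → A)}
    (hμ : ∀ u, Measure.map (shiftZ2 u) μ = μ) {q : (ℤ × ℤ → A) → ℝ}
    (hq : Measurable q) (v : ℤ × ℤ) : ∫ x, q (shiftZ2 v x) ∂μ = ∫ x, q x ∂μ := by
  conv_rhs => rw [← hμ v]
  rw [integral_map (measurable_shiftZ2 v).aemeasurable hq.aestronglyMeasurable]

variable [MeasurableSpace A] [MeasurableSingletonClass A] [Countable A]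
  {μ : Measure (ℤ × ℤ → A)} [IsProbabilityMeasure μ]

lemma integral_comp_shiftZ2_repair_le (hssf : SSF Fh Fv) (hμ : ∀ u, Measure.map (shiftZ2 u) μ = μ)
    {q : (ℤ × ℤ → A) → ℝ} (hq : Measurable q) {C K : ℝ} (hC : ∀ x, |q x| ≤ C) (hK : 0 ≤ K)
    (hqK : ∀ x y, |q x - q y| ≤ K * dmet x y) {v : ℤ × ℤ} (hv : supNorm v ≤ 1) :
    ∫ x, q (shiftZ2 v (repair hssf x)) ∂μ ≤
      ∫ x, q x ∂μ + 256 * K * (μ (defectSet Fh Fv)).toReal := by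
  set D := fun x => q (shiftZ2 v (repair hssf x)) - q (shiftZ2 v x)
  have hlint : ∫⁻ x, ENNReal.ofReal ‖D x‖ ∂μ ≤ ENNReal.ofReal (256 * K) * μ (defectSet Fh Fv) :=
    calc ∫⁻ x, ENNReal.ofReal ‖D x‖ ∂μ
        ≤ ∫⁻ x, ENNReal.ofReal K * (4 * defectWeight Fh Fv x) ∂μ := lintegral_mono fun x => by
          rw [Real.norm_eq_abs]
          refine (ENNReal.ofReal_le_ofReal (hqK _ _)).trans ?_
          rw [ENNReal.ofReal_mul hK]
          gcongr
          exact ofReal_dmet_shiftZ2_repair_le hssf x hv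
      _ = ENNReal.ofReal K * 4 * ∫⁻ x, defectWeight Fh Fv x ∂μ := by
          rw [lintegral_const_mul' _ _ (by finiteness), lintegral_const_mul' _ _ (by finiteness),
            mul_assoc]
      _ ≤ ENNReal.ofReal K * 4 * (64 * μ (defectSet Fh Fv)) := by
          gcongr
          exact lintegral_defectWeight_le hμ
      _ = ENNReal.ofReal (256 * K) * μ (defectSet Fh Fv) := by
          rw [ENNReal.ofReal_mul (by norm_num), mul_comm (ENNReal.ofReal _)]
          norm_num
          ring
  have hD : ∫ x, D x ∂μ ≤ 256 * K * (μ (defectSet Fh Fv)).toReal :=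
    calc ∫ x, D x ∂μ ≤ ‖∫ x, D x ∂μ‖ := Real.le_norm_self _
      _ ≤ (∫⁻ x, ENNReal.ofReal ‖D x‖ ∂μ).toReal := norm_integral_le_lintegral_norm D
      _ ≤ (ENNReal.ofReal (256 * K) * μ (defectSet Fh Fv)).toReal :=
          ENNReal.toReal_mono (by finiteness) hlint
      _ = 256 * K * (μ (defectSet Fh Fv)).toReal := by
          rw [ENNReal.toReal_mul, ENNReal.toReal_ofReal (by positivity)]
  have hint {f : (ℤ × ℤ → A) → ℤ × ℤ → A} (hf : Measurable f) : Integrable (fun x => q (f x)) μ :=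
    Integrable.of_bound (hq.comp hf).aestronglyMeasurable C (ae_of_all _ fun x => hC (f x))
  have hsplit : ∫ x, D x ∂μ = ∫ x, q (shiftZ2 v (repair hssf x)) ∂μ - ∫ x, q x ∂μ := by
    rw [← integral_comp_shiftZ2 hμ hq v]
    exact integral_sub (hint ((measurable_shiftZ2 v).comp (measurable_repair hssf)))
      (hint (measurable_shiftZ2 v))
  linarith

lemma integral_add_le_integral_repairAverage [TopologicalSpace A] [DiscreteTopology A]
    (hssf : SSF Fh Fv) {g : (ℤ × ℤ → A) → ℝ} {C K : ℝ}
    (hC : ∀ x, |penalty Fh Fv x - g x| ≤ C) (hK₀ : 0 ≤ K)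
    (hgK : ∀ x y, |(penalty Fh Fv x - g x) - (penalty Fh Fv y - g y)| ≤ K * dmet x y)
    (hμ : ∀ u, Measure.map (shiftZ2 u) μ = μ) :
    ∫ x, g x ∂μ + (1 - 256 * K) * (μ (defectSet Fh Fv)).toReal ≤
      ∫ x, g x ∂(repairAverage hssf μ) := by
  set q := fun x => penalty Fh Fv x - g x
  have hq : Measurable q := (continuous_of_abs_sub_le_dmet hK₀ hgK).measurable
  have hg : Measurable g := by
    convert (measurable_penalty (Fh := Fh) (Fv := Fv)).sub hq using 1
    funext x
    simp [q]
  have hgM (x) : |g x| ≤ 1 + C :=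
    calc |g x| = |penalty Fh Fv x - q x| := by simp [q]
      _ ≤ 1 + C := (abs_sub _ _).trans (add_le_add (abs_penalty_le_one x) (hC x))
  have hg_repair (v x) : g (shiftZ2 v (repair hssf x)) = -q (shiftZ2 v (repair hssf x)) := by
    simp [q, penalty_eq_zero_of_mem_XF (shiftZ2_mem_XF (repair_mem_XF hssf x) v)]
  have hgμ : ∫ x, g x ∂μ = -(μ (defectSet Fh Fv)).toReal - ∫ x, q x ∂μ := by
    have hpen : Integrable (penalty Fh Fv) μ :=
      .of_bound measurable_penalty.aestronglyMeasurable 1 (ae_of_all _ abs_penalty_le_one)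
    have hint_q : Integrable q μ := .of_bound hq.aestronglyMeasurable C (ae_of_all _ hC)
    calc ∫ x, g x ∂μ = ∫ x, penalty Fh Fv x - q x ∂μ := by simp [q]
      _ = _ := by rw [integral_sub hpen hint_q, integral_penalty]
  have hsum : ∑ v ∈ evenReps, ∫ x, q (shiftZ2 v (repair hssf x)) ∂μ ≤
      4 * (∫ x, q x ∂μ + 256 * K * (μ (defectSet Fh Fv)).toReal) := by
    refine (Finset.sum_le_sum fun v hv => integral_comp_shiftZ2_repair_le hssf hμ hq hC hK₀ hgK
      ?_).trans_eq (by rw [Finset.sum_const, card_evenReps, nsmul_eq_mul]; norm_num)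
    simp only [mem_evenReps] at hv
    simp only [supNorm]
    omega
  simp only [integral_repairAverage hssf hg hgM, hg_repair, integral_neg, Finset.sum_neg_distrib,
    hgμ]
  linarith

end Main

end PenaltyStability

open PenaltyStability

/-- Main theorem: stability of the penalty function of a nearest-neighbor `ℤ²` SFT with
single-site fillability under Lipschitz perturbations. -/
theorem stmt15 {A : Type*} [Fintype A] [TopologicalSpace A] [DiscreteTopology A]
    [MeasurableSpace A] [BorelSpace A]
    (Fh Fv : Set (A × A)) (hssf : SSF Fh Fv) :
    ∃ ε > (0 : ℝ), ∀ g : (ℤ × ℤ → A) → ℝ,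
      (∃ C K : ℝ, 0 ≤ C ∧ 0 ≤ K ∧
        (∀ x : ℤ × ℤ → A, |penalty Fh Fv x - g x| ≤ C) ∧
        (∀ x y : ℤ × ℤ → A,
          |(penalty Fh Fv x - g x) - (penalty Fh Fv y - g y)| ≤ K * dmet x y) ∧
        C + K < ε) →
      ∀ μ : Measure (ℤ × ℤ → A), IsProbabilityMeasure μ →
        (∀ u : ℤ × ℤ, Measure.map (shiftZ2 u) μ = μ) →
        (∀ ν : Measure (ℤ × ℤ → A), IsProbabilityMeasure ν →
          (∀ u : ℤ × ℤ, Measure.map (shiftZ2 u) ν = ν) →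
          ∫ x, g x ∂ν ≤ ∫ x, g x ∂μ) →
        μ (XF Fh Fv)ᶜ = 0 := by
  refine ⟨1 / 256, by norm_num, ?_⟩
  rintro g ⟨C, K, hC₀, hK₀, hC, hgK, hCK⟩ μ hμ hinv hmax
  have hgain := integral_add_le_integral_repairAverage hssf hC hK₀ hgK hinv
  have hν := hmax _ (isProbabilityMeasure_repairAverage hssf) (map_shiftZ2_repairAverage hssf hinv)
  have hB : (μ (defectSet Fh Fv)).toReal = 0 := by
    nlinarith [ENNReal.toReal_nonneg (a := μ (defectSet Fh Fv))]
  exact measure_compl_XF_eq_zero hinv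
    (((ENNReal.toReal_eq_zero_iff _).mp hB).resolve_right (measure_ne_top _ _))
end
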